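/- Let r ∈ (0,1), N ≥ 1 an integer, and z ∈ ℂ with r < |z| < 1. Then ∑_{j=0}^{N−1} K_r(z·e^{2πij/N}) = N · K_{r^N}(z^N), where K_r denotes the Villat kernel K_r(z) = (1+z)/(1−z) + ∑_{k=1}^∞ (2r^{2k}/(1−r^{2k}))·(z^k − z^{−k}). -/

import Mathlib

/-! Averaging over the `N`-th roots of unity kills every Laurent coefficient of `K_r` whose index
is not a multiple of `N`, and the surviving coefficient of `z^{Nm}` is exactly the coefficient of
`w^m` in `K_{r^N}(w)` at `w = z^N`. -/

open Complex Set Finset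

noncomputable def villatK (r : ℝ) (z : ℂ) : ℂ :=
  1 + 2 * ∑' k : ℕ,
    ((z ^ (k + 1) - (r : ℂ) ^ (2 * (k + 1)) * z⁻¹ ^ (k + 1)) /
      (1 - (r : ℂ) ^ (2 * (k + 1))))

noncomputable def villatTerm (r : ℝ) (z : ℂ) (m : ℕ) : ℂ :=
  (z ^ m - (r : ℂ) ^ (2 * m) * z⁻¹ ^ m) / (1 - (r : ℂ) ^ (2 * m))

lemma villatK_eq_one_add_tsum (r : ℝ) (z : ℂ) :
    villatK r z = 1 + 2 * ∑' k : ℕ, villatTerm r z (k + 1) :=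
  rfl

lemma villatTerm_pow (r : ℝ) (z : ℂ) (N m : ℕ) :
    villatTerm (r ^ N) (z ^ N) m = villatTerm r z (N * m) := by
  simp only [villatTerm, ofReal_pow, inv_pow, ← pow_mul]
  ring_nf

lemma norm_villatTerm_succ_le {r : ℝ} {z : ℂ} (hr : r ^ 2 < 1) (k : ℕ) :
    ‖villatTerm r z (k + 1)‖ ≤
      (‖z‖ ^ (k + 1) + (r ^ 2 / ‖z‖) ^ (k + 1)) / (1 - r ^ 2) := by
  have hrpow : ‖(r : ℂ) ^ (2 * (k + 1))‖ = (r ^ 2) ^ (k + 1) := by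
    rw [norm_pow, norm_real, Real.norm_eq_abs, pow_mul, sq_abs]
  have hnum : ‖z ^ (k + 1) - (r : ℂ) ^ (2 * (k + 1)) * z⁻¹ ^ (k + 1)‖ ≤
      ‖z‖ ^ (k + 1) + (r ^ 2 / ‖z‖) ^ (k + 1) := by
    refine (norm_sub_le _ _).trans_eq ?_
    rw [norm_mul, hrpow, norm_pow, norm_pow, norm_inv, ← mul_pow, div_eq_mul_inv]
  have hden : 1 - r ^ 2 ≤ ‖1 - (r : ℂ) ^ (2 * (k + 1))‖ := by
    have hle : (r ^ 2) ^ (k + 1) ≤ r ^ 2 :=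
      pow_le_of_le_one (sq_nonneg r) hr.le k.succ_ne_zero
    have := norm_sub_norm_le (1 : ℂ) ((r : ℂ) ^ (2 * (k + 1)))
    rw [norm_one, hrpow] at this
    linarith
  rw [villatTerm, norm_div]
  exact div_le_div₀ (by positivity) hnum (by linarith) hden

lemma summable_villatTerm_succ {r : ℝ} {z : ℂ} (hz₁ : r ^ 2 < ‖z‖) (hz₂ : ‖z‖ < 1) :
    Summable fun k : ℕ => villatTerm r z (k + 1) := by
  have hz₀ : 0 < ‖z‖ := (sq_nonneg r).trans_lt hz₁
  have hratio : r ^ 2 / ‖z‖ < 1 := (div_lt_one hz₀).mpr hz₁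
  refine .of_norm_bounded ?_ (norm_villatTerm_succ_le (hz₁.trans hz₂))
  refine .div_const (.add ?_ ?_) _
  · exact (summable_nat_add_iff 1).mpr (summable_geometric_of_lt_one (norm_nonneg z) hz₂)
  · exact (summable_nat_add_iff 1).mpr (summable_geometric_of_lt_one (by positivity) hratio)

lemma IsPrimitiveRoot.sum_mul_pow_pow {K : Type*} [Field K] {ζ : K} {N : ℕ}
    (hζ : IsPrimitiveRoot ζ N) (w : K) (m : ℕ) :
    ∑ j ∈ range N, (w * ζ ^ j) ^ m = if N ∣ m then (N : K) * w ^ m else 0 := by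
  have hterm : ∀ j, (w * ζ ^ j) ^ m = w ^ m * (ζ ^ m) ^ j := fun j => by
    rw [mul_pow, ← pow_mul, ← pow_mul, mul_comm j]
  rw [sum_congr rfl fun j _ => hterm j, ← mul_sum]
  split_ifs with hdvd
  · rw [(hζ.pow_eq_one_iff_dvd m).mpr hdvd]
    simp [mul_comm]
  · have hne : ζ ^ m ≠ 1 := fun h => hdvd ((hζ.pow_eq_one_iff_dvd m).mp h)
    rw [geom_sum_eq hne, ← pow_mul, mul_comm m, pow_mul, hζ.pow_eq_one, one_pow, sub_self,
      zero_div, mul_zero]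

lemma sum_villatTerm_mul_rootOfUnity {ζ : ℂ} {N : ℕ} (hζ : IsPrimitiveRoot ζ N)
    (r : ℝ) (z : ℂ) (m : ℕ) :
    ∑ j ∈ range N, villatTerm r (z * ζ ^ j) m =
      if N ∣ m then (N : ℂ) * villatTerm r z m else 0 := by
  have hinv : ∀ j, (z * ζ ^ j)⁻¹ = z⁻¹ * ζ⁻¹ ^ j := fun j => by rw [mul_inv, inv_pow]
  simp only [villatTerm, ← sum_div, sum_sub_distrib, ← mul_sum, hinv,
    hζ.sum_mul_pow_pow, hζ.inv.sum_mul_pow_pow]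
  split_ifs <;> ring

lemma tsum_succ_eq_tsum_mul_succ_of_dvd {α : Type*} [AddCommMonoid α] [TopologicalSpace α]
    {f : ℕ → α} {N : ℕ} (hN : 0 < N) (hf : ∀ m, ¬ N ∣ m → f m = 0) :
    ∑' k, f (k + 1) = ∑' s, f (N * (s + 1)) := by
  have hidx : ∀ s, N * s + (N - 1) + 1 = N * (s + 1) := fun s => by
    rw [mul_add_one]; omega
  have hinj : Function.Injective fun s => N * s + (N - 1) := fun a b hab =>
    Nat.eq_of_mul_eq_mul_left hN (Nat.add_right_cancel hab)
  have hsupp : Function.support (fun k => f (k + 1)) ⊆ Set.range fun s => N * s + (N - 1) := by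
    intro k hk
    obtain ⟨t, ht⟩ : N ∣ k + 1 := by_contra fun h => hk (hf _ h)
    obtain ⟨s, rfl⟩ : ∃ s, t = s + 1 := Nat.exists_eq_succ_of_ne_zero (by rintro rfl; omega)
    exact ⟨s, by dsimp only; have := hidx s; omega⟩
  rw [← hinj.tsum_eq hsupp]
  simp only [hidx]

theorem villat_kernel_sum_roots_of_unity
    (r : ℝ) (hr : r ∈ Ioo (0:ℝ) 1) (N : ℕ) (hN : 1 ≤ N)
    (z : ℂ) (hz₁ : r < ‖z‖) (hz₂ : ‖z‖ < 1) :
    (∑ j ∈ Finset.range N,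
        villatK r (z * Complex.exp (2 * Real.pi * Complex.I * j / N))) =
      (N : ℂ) * villatK (r ^ N) (z ^ N) := by
  have hN₀ : N ≠ 0 := by omega
  set ζ := Complex.exp (2 * Real.pi * Complex.I / N)
  have hζ : IsPrimitiveRoot ζ N := Complex.isPrimitiveRoot_exp N hN₀
  have hroot : ∀ j : ℕ, Complex.exp (2 * Real.pi * Complex.I * j / N) = ζ ^ j := fun j => by
    rw [← Complex.exp_nat_mul]; ring_nf
  have hsq : r ^ 2 < ‖z‖ := by nlinarith [hr.1, hr.2]
  have hnorm : ∀ j : ℕ, ‖z * ζ ^ j‖ = ‖z‖ := fun j => by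
    rw [norm_mul, norm_pow, hζ.norm'_eq_one hN₀, one_pow, mul_one]
  have hsummable : ∀ j ∈ range N, Summable fun k => villatTerm r (z * ζ ^ j) (k + 1) :=
    fun j _ => summable_villatTerm_succ (hnorm j ▸ hsq) (hnorm j ▸ hz₂)
  calc ∑ j ∈ range N, villatK r (z * Complex.exp (2 * Real.pi * Complex.I * j / N))
      = ∑ j ∈ range N, (1 + 2 * ∑' k, villatTerm r (z * ζ ^ j) (k + 1)) := by
        simp only [hroot, villatK_eq_one_add_tsum]
    _ = N + 2 * ∑' k, ∑ j ∈ range N, villatTerm r (z * ζ ^ j) (k + 1) := by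
        rw [sum_add_distrib, ← mul_sum, Summable.tsum_finsetSum hsummable]
        simp
    _ = N + 2 * ∑' s, N * villatTerm r z (N * (s + 1)) := by
        simp only [sum_villatTerm_mul_rootOfUnity hζ]
        rw [tsum_succ_eq_tsum_mul_succ_of_dvd
          (f := fun m => if N ∣ m then (N : ℂ) * villatTerm r z m else 0) hN
          fun m hm => if_neg hm]
        simp only [dvd_mul_right, if_true]
    _ = N * villatK (r ^ N) (z ^ N) := by
        simp only [villatK_eq_one_add_tsum, villatTerm_pow, tsum_mul_left]
        ring
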